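/- Let λ, μ ∈ (0,∞), d ∈ ℕ with d ≥ 2, and r ∈ (0,1). Write ψ_{u,T}(x) = I_{1,T}(u, x^{1/d}) on [0,1] and let ψ̂_{u,T} be its convex minorant. Then: (i) if ψ̂_{0,T}(r^d) = ψ_{0,T}(r^d) for some T > 0, then ψ̂_{0,T'}(r^d) = ψ_{0,T'}(r^d) for all T' > T; and (ii) if ψ̂_{1,T}(r^d) < ψ_{1,T}(r^d) for some T > 0, then ψ̂_{1,T'}(r^d) < ψ_{1,T'}(r^d) for all T' > T. -/

import Mathlib

noncomputable section

open MeasureTheory Real Filter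

/-- Probability that an initially inactive edge is active at time `t`. -/
def p01 (lam mu t : ℝ) : ℝ := (lam - lam * Real.exp (-(t * (lam + mu)))) / (lam + mu)

/-- Probability that an initially active edge is active at time `t`. -/
def p11 (lam mu t : ℝ) : ℝ := (lam + mu * Real.exp (-(t * (lam + mu)))) / (lam + mu)

/-- The cumulant-type function `J_{t,v}(u)`. -/
def Jfun (lam mu t v u : ℝ) : ℝ :=
  u * Real.log (1 - p11 lam mu t + Real.exp v * p11 lam mu t) +
  (1 - u) * Real.log (1 - p01 lam mu t + Real.exp v * p01 lam mu t)

/-- The one-step rate function `I_{1,t}(u,x) = sup_v [v x - J_{t,v}(u)]`. -/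
def I1 (lam mu t u x : ℝ) : ℝ := ⨆ v : ℝ, (v * x - Jfun lam mu t v u)

/-- `φ` is the convex minorant of `ψ` on `[0,1]`: the largest convex function on `[0,1]`
bounded above by `ψ`. -/
def IsConvexMinorant (ψ φ : ℝ → ℝ) : Prop :=
  ConvexOn ℝ (Set.Icc (0:ℝ) 1) φ ∧ (∀ x ∈ Set.Icc (0:ℝ) 1, φ x ≤ ψ x) ∧
  ∀ φ' : ℝ → ℝ, ConvexOn ℝ (Set.Icc (0:ℝ) 1) φ' → (∀ x ∈ Set.Icc (0:ℝ) 1, φ' x ≤ ψ x) →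
    ∀ x ∈ Set.Icc (0:ℝ) 1, φ' x ≤ φ x

/-!
With `Λ*_p(y) = sup_v (v y - log (1 - p + eᵛ p))` the Bernoulli rate function, `I1 t 0 = Λ*_{p01 t}`
and `I1 t 1 = Λ*_{p11 t}`. Exponential tilting shows that `Λ*_{p'} - Λ*_p` is affine in `y` with
slope `log (p (1 - p') / (p' (1 - p)))`, which is `≤ 0` when `p ≤ p'`. As `p01` increases and
`p11` decreases in time, `ψ_{0,T'} - ψ_{0,T}` and `ψ_{1,T} - ψ_{1,T'}` have the form
`A + B x^{1/d}` with `B ≤ 0`, hence are convex on `[0,1]` because `x^{1/d}` is concave.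
If `ψ' - ψ` is convex then `ψ̂ + (ψ' - ψ)` is a convex function below `ψ'`, so wherever `ψ`
touches its convex minorant, so does `ψ'`: (i) is this for `u = 0`, (ii) its contrapositive
for `u = 1`.
-/

open Set

def bernoulliRate (p y : ℝ) : ℝ := ⨆ v : ℝ, (v * y - log (1 - p + exp v * p))

section BernoulliRate

variable {p p' y : ℝ}

lemma bernoulli_tilt_le_max (hp : p ∈ Ioo 0 1) (hy : y ∈ Icc 0 1) (v : ℝ) :
    v * y - log (1 - p + exp v * p) ≤ max (-log (1 - p)) (-log p) := by
  obtain ⟨hp0, hp1⟩ := hp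
  obtain ⟨hy0, hy1⟩ := hy
  have hev : 0 < exp v * p := by positivity
  rcases le_total v 0 with hv | hv
  · have : log (1 - p) ≤ log (1 - p + exp v * p) := log_le_log (by linarith) (by linarith)
    nlinarith [le_max_left (-log (1 - p)) (-log p)]
  · have : log (exp v * p) ≤ log (1 - p + exp v * p) := log_le_log hev (by linarith)
    rw [log_mul (exp_ne_zero v) hp0.ne', log_exp] at this
    nlinarith [le_max_right (-log (1 - p)) (-log p)]

lemma bddAbove_range_bernoulli_tilt (hp : p ∈ Ioo 0 1) (hy : y ∈ Icc 0 1) :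
    BddAbove (range fun v => v * y - log (1 - p + exp v * p)) :=
  ⟨_, forall_mem_range.2 (bernoulli_tilt_le_max hp hy)⟩

lemma bernoulliRate_tilt (hp : p ∈ Ioo 0 1) (hp' : p' ∈ Ioo 0 1) (hy : y ∈ Icc 0 1) :
    bernoulliRate p' y = bernoulliRate p y +
      (log ((1 - p) / (1 - p')) + log (p * (1 - p') / (p' * (1 - p))) * y) := by
  have ⟨hp0, hp1⟩ := hp
  have ⟨hp'0, hp'1⟩ := hp'
  set f : ℝ → ℝ := fun v => v * y - log (1 - p + exp v * p)
  set A := log ((1 - p) / (1 - p'))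
  set B := log (p * (1 - p') / (p' * (1 - p)))
  have hexpB : exp B = p * (1 - p') / (p' * (1 - p)) := exp_log (by positivity)
  have hshift : ∀ v, v * y - log (1 - p' + exp v * p') = f (v - B) + (A + B * y) := by
    intro v
    have hmix : 1 - p + exp (v - B) * p = (1 - p) / (1 - p') * (1 - p' + exp v * p') := by
      rw [exp_sub, hexpB]
      field_simp
    simp only [f, hmix, A]
    rw [log_mul (by positivity) (by positivity)]
    ring
  have hbdd : BddAbove (range fun v => f (v - B)) :=
    (bddAbove_range_bernoulli_tilt hp hy).mono (range_comp_subset_range (· - B) f)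
  calc bernoulliRate p' y = ⨆ v, (f (v - B) + (A + B * y)) := iSup_congr hshift
    _ = (⨆ v, f (v - B)) + (A + B * y) := ((OrderIso.addRight _).map_ciSup hbdd).symm
    _ = bernoulliRate p y + (A + B * y) :=
      congrArg (· + (A + B * y)) ((Equiv.subRight B).surjective.iSup_comp f)

lemma convexOn_bernoulliRate_rpow_sub {c : ℝ} (hp : p ∈ Ioo 0 1) (hp' : p' ∈ Ioo 0 1)
    (hpp' : p ≤ p') (hc0 : 0 ≤ c) (hc1 : c ≤ 1) :
    ConvexOn ℝ (Icc 0 1) fun x => bernoulliRate p' (x ^ c) - bernoulliRate p (x ^ c) := by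
  have ⟨hp0, hp1⟩ := hp
  have ⟨hp'0, hp'1⟩ := hp'
  set A := log ((1 - p) / (1 - p'))
  set B := log (p * (1 - p') / (p' * (1 - p)))
  have hB : B ≤ 0 := by
    refine log_nonpos (by positivity) ((div_le_one (by nlinarith)).2 ?_)
    nlinarith
  have hconcave : ConcaveOn ℝ (Icc 0 1) fun x : ℝ => x ^ c :=
    (concaveOn_rpow hc0 hc1).subset Icc_subset_Ici_self (convex_Icc 0 1)
  refine ((hconcave.neg.smul (neg_nonneg.2 hB)).add_const A).congr fun x hx => ?_
  rw [bernoulliRate_tilt hp hp' ⟨rpow_nonneg hx.1 c, rpow_le_one hx.1 hx.2 hc0⟩]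
  simp only [Pi.add_apply, Pi.neg_apply, smul_eq_mul]
  ring

end BernoulliRate

lemma I1_zero (lam mu t y : ℝ) : I1 lam mu t 0 y = bernoulliRate (p01 lam mu t) y := by
  simp [I1, Jfun, bernoulliRate]

lemma I1_one (lam mu t y : ℝ) : I1 lam mu t 1 y = bernoulliRate (p11 lam mu t) y := by
  simp [I1, Jfun, bernoulliRate]

lemma I1_nonneg (lam mu t u x : ℝ) : 0 ≤ I1 lam mu t u x := by
  unfold I1
  by_cases h : BddAbove (range fun v => v * x - Jfun lam mu t v u)
  · simpa [Jfun] using le_ciSup h 0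
  · exact (iSup_of_not_bddAbove h).ge

section Switching

variable {lam mu : ℝ}

lemma p01_mem_Ioo (hlam : 0 < lam) (hmu : 0 < mu) {t : ℝ} (ht : 0 < t) :
    p01 lam mu t ∈ Ioo 0 1 := by
  have he1 : exp (-(t * (lam + mu))) < 1 := exp_lt_one_iff.2 (by nlinarith)
  have he0 := exp_pos (-(t * (lam + mu)))
  unfold p01
  constructor
  · apply div_pos <;> nlinarith
  · rw [div_lt_one (by linarith)]; nlinarith

lemma p11_mem_Ioo (hlam : 0 < lam) (hmu : 0 < mu) {t : ℝ} (ht : 0 < t) :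
    p11 lam mu t ∈ Ioo 0 1 := by
  have he1 : exp (-(t * (lam + mu))) < 1 := exp_lt_one_iff.2 (by nlinarith)
  have he0 := exp_pos (-(t * (lam + mu)))
  unfold p11
  constructor
  · apply div_pos <;> nlinarith
  · rw [div_lt_one (by linarith)]; nlinarith

lemma p01_mono (hlam : 0 < lam) (hmu : 0 < mu) : Monotone (p01 lam mu) := by
  intro t t' htt'
  unfold p01
  gcongr

lemma p11_anti (hlam : 0 < lam) (hmu : 0 < mu) : Antitone (p11 lam mu) := by
  intro t t' htt'
  unfold p11
  gcongr

end Switching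

namespace IsConvexMinorant

variable {ψ ψ' Φ Φ' : ℝ → ℝ}

lemma add_sub_le (hΦ : IsConvexMinorant ψ Φ) (hΦ' : IsConvexMinorant ψ' Φ')
    (hconv : ConvexOn ℝ (Icc 0 1) fun x => ψ' x - ψ x) {x : ℝ} (hx : x ∈ Icc 0 1) :
    Φ x + (ψ' x - ψ x) ≤ Φ' x :=
  hΦ'.2.2 (fun x => Φ x + (ψ' x - ψ x)) (hΦ.1.add hconv) (fun y hy => by linarith [hΦ.2.1 y hy])
    x hx

lemma apply_eq_of_convexOn_sub (hΦ : IsConvexMinorant ψ Φ) (hΦ' : IsConvexMinorant ψ' Φ')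
    (hconv : ConvexOn ℝ (Icc 0 1) fun x => ψ' x - ψ x) {a : ℝ} (ha : a ∈ Icc 0 1)
    (htouch : Φ a = ψ a) : Φ' a = ψ' a :=
  (hΦ'.2.1 a ha).antisymm (by linarith [hΦ.add_sub_le hΦ' hconv ha])

end IsConvexMinorant

lemma exists_isConvexMinorant {ψ : ℝ → ℝ} (hψ : BddBelow (ψ '' Icc 0 1)) :
    ∃ Φ, IsConvexMinorant ψ Φ := by
  obtain ⟨m, hm⟩ := hψ
  set S : Set (ℝ → ℝ) := {φ | ConvexOn ℝ (Icc 0 1) φ ∧ ∀ x ∈ Icc 0 1, φ x ≤ ψ x}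
  have hconst : (fun _ => m) ∈ S :=
    ⟨convexOn_const m (convex_Icc 0 1), fun x hx => hm (mem_image_of_mem ψ hx)⟩
  have hne : ∀ x, ((fun φ : ℝ → ℝ => φ x) '' S).Nonempty := fun x => ⟨m, _, hconst, rfl⟩
  have hbdd : ∀ x ∈ Icc (0 : ℝ) 1, BddAbove ((fun φ : ℝ → ℝ => φ x) '' S) :=
    fun x hx => ⟨ψ x, forall_mem_image.2 fun φ hφ => hφ.2 x hx⟩
  have hle : ∀ φ ∈ S, ∀ x ∈ Icc (0 : ℝ) 1, φ x ≤ sSup ((fun φ : ℝ → ℝ => φ x) '' S) :=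
    fun φ hφ x hx => le_csSup (hbdd x hx) ⟨φ, hφ, rfl⟩
  refine ⟨fun x => sSup ((fun φ : ℝ → ℝ => φ x) '' S), ⟨convex_Icc 0 1, ?_⟩,
    fun x hx => csSup_le (hne x) (forall_mem_image.2 fun φ hφ => hφ.2 x hx),
    fun φ hconv hφ x hx => hle φ ⟨hconv, hφ⟩ x hx⟩
  intro x hx y hy a b ha hb hab
  refine csSup_le (hne _) (forall_mem_image.2 fun φ hφ => ?_)
  calc φ (a • x + b • y) ≤ a • φ x + b • φ y := hφ.1.2 hx hy ha hb hab
    _ ≤ _ := by gcongr <;> exact hle φ hφ _ ‹_›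

theorem stmt_18_general (lam mu : ℝ) (hlam : 0 < lam) (hmu : 0 < mu)
    (d : ℕ) (r : ℝ) (hr : r ∈ Set.Ioo (0:ℝ) 1) :
    ((∀ T : ℝ, 0 < T →
        (∀ psihat : ℝ → ℝ,
          IsConvexMinorant (fun x => I1 lam mu T 0 (x ^ (1 / (d:ℝ)))) psihat →
          psihat (r ^ d) = I1 lam mu T 0 ((r ^ d) ^ (1 / (d:ℝ)))) →
        ∀ T' : ℝ, T < T' →
          ∀ psihat : ℝ → ℝ,
            IsConvexMinorant (fun x => I1 lam mu T' 0 (x ^ (1 / (d:ℝ)))) psihat →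
            psihat (r ^ d) = I1 lam mu T' 0 ((r ^ d) ^ (1 / (d:ℝ)))) ∧
     (∀ T : ℝ, 0 < T →
        (∀ psihat : ℝ → ℝ,
          IsConvexMinorant (fun x => I1 lam mu T 1 (x ^ (1 / (d:ℝ)))) psihat →
          psihat (r ^ d) < I1 lam mu T 1 ((r ^ d) ^ (1 / (d:ℝ)))) →
        ∀ T' : ℝ, T < T' →
          ∀ psihat : ℝ → ℝ,
            IsConvexMinorant (fun x => I1 lam mu T' 1 (x ^ (1 / (d:ℝ)))) psihat →
            psihat (r ^ d) < I1 lam mu T' 1 ((r ^ d) ^ (1 / (d:ℝ))))) := by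
  set c : ℝ := 1 / (d : ℝ)
  have hc0 : 0 ≤ c := by positivity
  have hc1 : c ≤ 1 := by
    rcases d.eq_zero_or_pos with rfl | hd
    · simp [c]
    · exact div_le_one_of_le₀ (by exact_mod_cast hd) (by positivity)
  have ha : r ^ d ∈ Icc (0 : ℝ) 1 := ⟨by positivity [hr.1], pow_le_one₀ hr.1.le hr.2.le⟩
  have hex : ∀ u T, ∃ Φ, IsConvexMinorant (fun x => I1 lam mu T u (x ^ c)) Φ := fun u T =>
    exists_isConvexMinorant ⟨0, forall_mem_image.2 fun x _ => I1_nonneg lam mu T u _⟩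
  refine ⟨fun T hT htouch T' hTT' Φ' hΦ' => ?_, fun T hT hoff T' hTT' Φ' hΦ' => ?_⟩
  · have hconv : ConvexOn ℝ (Icc 0 1) fun x =>
        I1 lam mu T' 0 (x ^ c) - I1 lam mu T 0 (x ^ c) := by
      simp only [I1_zero]
      exact convexOn_bernoulliRate_rpow_sub (p01_mem_Ioo hlam hmu hT)
        (p01_mem_Ioo hlam hmu (hT.trans hTT')) (p01_mono hlam hmu hTT'.le) hc0 hc1
    obtain ⟨Φ, hΦ⟩ := hex 0 T
    exact hΦ.apply_eq_of_convexOn_sub hΦ' hconv ha (htouch Φ hΦ)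
  · have hconv : ConvexOn ℝ (Icc 0 1) fun x =>
        I1 lam mu T 1 (x ^ c) - I1 lam mu T' 1 (x ^ c) := by
      simp only [I1_one]
      exact convexOn_bernoulliRate_rpow_sub (p11_mem_Ioo hlam hmu (hT.trans hTT'))
        (p11_mem_Ioo hlam hmu hT) (p11_anti hlam hmu hTT'.le) hc0 hc1
    obtain ⟨Φ, hΦ⟩ := hex 1 T
    refine (hΦ'.2.1 _ ha).lt_of_ne fun htouch => (hoff Φ hΦ).ne ?_
    exact hΦ'.apply_eq_of_convexOn_sub hΦ hconv ha htouch

/-- Monotonicity of the phase in the time horizon for the extreme initial values `u = 0` and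
`u = 1`: (i) once `(r^d, I_{1,T}(0,r))` lies on the convex minorant it stays there for all
larger `T`; (ii) once `(r^d, I_{1,T}(1,r))` lies strictly off the convex minorant it stays
off for all larger `T`. -/
theorem stmt_18 (lam mu : ℝ) (hlam : 0 < lam) (hmu : 0 < mu)
    (d : ℕ) (hd : 2 ≤ d) (r : ℝ) (hr : r ∈ Set.Ioo (0:ℝ) 1) :
    ((∀ T : ℝ, 0 < T →
        (∀ psihat : ℝ → ℝ,
          IsConvexMinorant (fun x => I1 lam mu T 0 (x ^ (1 / (d:ℝ)))) psihat →
          psihat (r ^ d) = I1 lam mu T 0 ((r ^ d) ^ (1 / (d:ℝ)))) →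
        ∀ T' : ℝ, T < T' →
          ∀ psihat : ℝ → ℝ,
            IsConvexMinorant (fun x => I1 lam mu T' 0 (x ^ (1 / (d:ℝ)))) psihat →
            psihat (r ^ d) = I1 lam mu T' 0 ((r ^ d) ^ (1 / (d:ℝ)))) ∧
     (∀ T : ℝ, 0 < T →
        (∀ psihat : ℝ → ℝ,
          IsConvexMinorant (fun x => I1 lam mu T 1 (x ^ (1 / (d:ℝ)))) psihat →
          psihat (r ^ d) < I1 lam mu T 1 ((r ^ d) ^ (1 / (d:ℝ)))) →
        ∀ T' : ℝ, T < T' →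
          ∀ psihat : ℝ → ℝ,
            IsConvexMinorant (fun x => I1 lam mu T' 1 (x ^ (1 / (d:ℝ)))) psihat →
            psihat (r ^ d) < I1 lam mu T' 1 ((r ^ d) ^ (1 / (d:ℝ))))) :=
  stmt_18_general lam mu hlam hmu d r hr
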